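/- Let ε_1,…,ε_n be independent centered random variables with E[exp(s ε_i)] ≤ exp(s²/2) for all s > 0 and all i. Then, for any positive integer d, any α > 0 and any x > 0: P( max over integers k with d ≤ k ≤ (1+α)d of (Σ_{i=1}^k ε_i)/√k ≥ x ) ≤ exp( −x²/(2(1+α)) ). -/

import Mathlib

/-! With `Sₖ = ε₁ + ⋯ + εₖ` and `n = ⌊(1 + α) d⌋`, the event forces `Sₖ ≥ x √d` for some `k ≤ n`.
For `t > 0` the process `exp (t Sₖ) / ∏_{i ≤ k} E[exp (t εᵢ)]` is a nonnegative martingale of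
mean one, and by the sub-Gaussian bound it is at least `exp (t x √d - n t² / 2)` on that event.
Doob's maximal inequality with `t = x √d / n` bounds the probability by
`exp (-x² d / (2 n)) ≤ exp (-x² / (2 (1 + α)))`. -/

open MeasureTheory ProbabilityTheory Finset Real

namespace MeasureTheory

variable {Ω : Type*} [MeasurableSpace Ω] {μ : Measure Ω} [IsFiniteMeasure μ]
  {𝒢 : Filtration ℕ ‹MeasurableSpace Ω›} {f : ℕ → Ω → ℝ}

theorem Submartingale.measure_le_sup'_le_integral_div (hsub : Submartingale f 𝒢 μ)
    (hnonneg : 0 ≤ f) {b : ℝ} (hb : 0 < b) (n : ℕ) :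
    μ {ω | b ≤ (range (n + 1)).sup' nonempty_range_add_one fun k => f k ω} ≤
      ENNReal.ofReal ((∫ ω, f n ω ∂μ) / b) := by
  set E := {ω | b ≤ (range (n + 1)).sup' nonempty_range_add_one fun k => f k ω}
  have hdoob : ENNReal.ofReal b * μ E ≤ ENNReal.ofReal (∫ ω, f n ω ∂μ) := by
    have h := maximal_ineq hsub hnonneg (ε := b.toNNReal) n
    rw [Real.coe_toNNReal _ hb.le] at h
    refine h.trans (ENNReal.ofReal_le_ofReal ?_)
    exact setIntegral_le_integral (hsub.integrable n) (.of_forall (hnonneg n))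
  rw [ENNReal.ofReal_div_of_pos hb, ENNReal.le_div_iff_mul_le (by simp [hb]) (by simp),
    mul_comm]
  exact hdoob

end MeasureTheory

namespace ProbabilityTheory

variable {Ω : Type*} [MeasurableSpace Ω] {P : Measure Ω} {ε : ℕ → Ω → ℝ} {t : ℝ}

noncomputable def expMartingale (ε : ℕ → Ω → ℝ) (P : Measure Ω) (t : ℝ) (k : ℕ) (ω : Ω) : ℝ :=
  exp (t * ∑ i ∈ Icc 1 k, ε i ω) / ∏ i ∈ Icc 1 k, mgf (ε i) P t

lemma expMartingale_succ (k : ℕ) :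
    expMartingale ε P t (k + 1) =
      expMartingale ε P t k * fun ω => exp (t * ε (k + 1) ω) / mgf (ε (k + 1)) P t := by
  funext ω
  simp only [expMartingale, Pi.mul_apply]
  rw [sum_Icc_succ_top (by omega), prod_Icc_succ_top (by omega), mul_add, exp_add,
    div_mul_div_comm]

lemma expMartingale_nonneg : 0 ≤ expMartingale ε P t := fun _ _ =>
  div_nonneg (exp_nonneg _) (prod_nonneg fun _ _ => mgf_nonneg)

lemma exp_sub_le_expMartingale {c : ℝ} (hpos : ∀ i, 0 < mgf (ε i) P t)
    (hle : ∀ i, mgf (ε i) P t ≤ exp c) (k : ℕ) (ω : Ω) :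
    exp (t * ∑ i ∈ Icc 1 k, ε i ω - k * c) ≤ expMartingale ε P t k ω := by
  have hprod : ∏ i ∈ Icc 1 k, mgf (ε i) P t ≤ exp (k * c) := by
    calc ∏ i ∈ Icc 1 k, mgf (ε i) P t ≤ ∏ _i ∈ Icc 1 k, exp c :=
          prod_le_prod (fun i _ => (hpos i).le) fun i _ => hle i
      _ = exp (k * c) := by rw [prod_const, Nat.card_Icc, Nat.add_sub_cancel, ← exp_nat_mul]
  rw [exp_sub, expMartingale]
  exact div_le_div_of_nonneg_left (exp_nonneg _) (prod_pos fun i _ => hpos i) hprod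

section Martingale

variable (hmeas : ∀ i, Measurable (ε i))
include hmeas

lemma stronglyAdapted_expMartingale :
    StronglyAdapted (Filtration.natural ε fun i => (hmeas i).stronglyMeasurable)
      (expMartingale ε P t) := by
  intro k
  have hsum : StronglyMeasurable[Filtration.natural ε (fun i => (hmeas i).stronglyMeasurable) k]
      fun ω => ∑ i ∈ Icc 1 k, ε i ω := by
    refine Finset.stronglyMeasurable_fun_sum _ fun i hi => ?_
    exact (Filtration.stronglyAdapted_natural _ i).mono (Filtration.mono _ (mem_Icc.mp hi).2)
  exact ((hsum.measurable.const_mul t).exp.div_const _).stronglyMeasurable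

variable [IsProbabilityMeasure P] (hindep : iIndepFun ε P)
  (hint : ∀ i, Integrable (fun ω => exp (t * ε i ω)) P)
include hindep hint

lemma integrable_expMartingale (k : ℕ) : Integrable (expMartingale ε P t k) P := by
  have := hindep.integrable_exp_mul_sum hmeas (s := Icc 1 k) fun i _ => hint i
  simp only [Finset.sum_apply] at this
  exact this.div_const _

lemma integral_expMartingale (k : ℕ) : ∫ ω, expMartingale ε P t k ω ∂P = 1 := by
  have h := hindep.mgf_sum hmeas (Icc 1 k) (t := t)
  simp only [mgf, Finset.sum_apply] at h
  unfold expMartingale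
  rw [integral_div, h]
  exact div_self (prod_pos fun i _ => mgf_pos (hint i)).ne'

lemma martingale_expMartingale :
    Martingale (expMartingale ε P t)
      (Filtration.natural ε fun i => (hmeas i).stronglyMeasurable) P := by
  set 𝒢 := Filtration.natural ε fun i => (hmeas i).stronglyMeasurable
  refine martingale_nat (stronglyAdapted_expMartingale hmeas)
    (integrable_expMartingale hmeas hindep hint) fun k => ?_
  set g : Ω → ℝ := fun ω => exp (t * ε (k + 1) ω) / mgf (ε (k + 1)) P t
  have hg_meas : StronglyMeasurable[MeasurableSpace.comap (ε (k + 1)) inferInstance] g :=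
    (((comap_measurable (ε (k + 1))).const_mul t).exp.div_const _).stronglyMeasurable
  have hg_integral : ∫ ω, g ω ∂P = 1 := by
    rw [integral_div]
    exact div_self (mgf_pos (hint (k + 1))).ne'
  have hcond : P[g|𝒢 k] =ᵐ[P] fun _ => 1 := by
    simpa only [hg_integral] using condExp_indep_eq (hmeas (k + 1)).comap_le (𝒢.le k) hg_meas
      (hindep.indep_comap_natural_of_lt (fun i => (hmeas i).stronglyMeasurable) k.lt_succ_self)
  have hpull : P[expMartingale ε P t (k + 1)|𝒢 k] =ᵐ[P] expMartingale ε P t k * P[g|𝒢 k] := by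
    rw [expMartingale_succ]
    refine condExp_mul_of_stronglyMeasurable_left (stronglyAdapted_expMartingale hmeas k)
      ?_ ((hint (k + 1)).div_const _)
    rw [← expMartingale_succ]
    exact integrable_expMartingale hmeas hindep hint (k + 1)
  filter_upwards [hpull, hcond] with ω hω hω'
  simp [hω, hω']

end Martingale

theorem measure_exists_le_sum_Icc_le_exp [IsProbabilityMeasure P] (hmeas : ∀ i, Measurable (ε i))
    (hindep : iIndepFun ε P)
    (hint : ∀ i (s : ℝ), 0 < s → Integrable (fun ω => exp (s * ε i ω)) P)
    (hsub : ∀ i (s : ℝ), 0 < s → ∫ ω, exp (s * ε i ω) ∂P ≤ exp (s ^ 2 / 2))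
    {n : ℕ} (hn : 0 < n) {a : ℝ} (ha : 0 < a) :
    P {ω | ∃ k ≤ n, a ≤ ∑ i ∈ Icc 1 k, ε i ω} ≤ ENNReal.ofReal (exp (-a ^ 2 / (2 * n))) := by
  have hn' : (0 : ℝ) < n := by exact_mod_cast hn
  -- the optimal exponent for the Chernoff bound at time `n`
  set t := a / n
  have ht : 0 < t := by positivity
  have hthreshold : exp (a ^ 2 / (2 * n)) = exp (t * a - n * (t ^ 2 / 2)) := by
    congr 1; simp only [t]; field_simp; ring
  have hevent : {ω | ∃ k ≤ n, a ≤ ∑ i ∈ Icc 1 k, ε i ω} ⊆ {ω | exp (a ^ 2 / (2 * n)) ≤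
      (range (n + 1)).sup' nonempty_range_add_one fun k => expMartingale ε P t k ω} := by
    rintro ω ⟨k, hkn, hak⟩
    refine le_trans ?_
      (le_sup' (fun k => expMartingale ε P t k ω) (mem_range.2 (Nat.lt_succ_of_le hkn)))
    refine hthreshold ▸ le_trans (exp_le_exp.2 ?_)
      (exp_sub_le_expMartingale (fun i => mgf_pos (hint i t ht)) (fun i => hsub i t ht) k ω)
    gcongr
  calc P {ω | ∃ k ≤ n, a ≤ ∑ i ∈ Icc 1 k, ε i ω}
      ≤ ENNReal.ofReal ((∫ ω, expMartingale ε P t n ω ∂P) / exp (a ^ 2 / (2 * n))) :=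
        (measure_mono hevent).trans <|
          (martingale_expMartingale hmeas hindep fun i => hint i t ht).submartingale
            |>.measure_le_sup'_le_integral_div expMartingale_nonneg (exp_pos _) n
    _ = ENNReal.ofReal (exp (-a ^ 2 / (2 * n))) := by
        rw [integral_expMartingale hmeas hindep fun i => hint i t ht, one_div, ← exp_neg,
          neg_div]

end ProbabilityTheory

theorem maximal_inequality_normalized_partial_sums
    {Ω : Type} [MeasurableSpace Ω] (P : Measure Ω) [IsProbabilityMeasure P]
    (ε : ℕ → Ω → ℝ)
    (hmeas : ∀ i, Measurable (ε i))
    (hindep : iIndepFun ε P)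
    (hint : ∀ i (s : ℝ), 0 < s → Integrable (fun ω => Real.exp (s * ε i ω)) P)
    (hsub : ∀ i (s : ℝ), 0 < s → ∫ ω, Real.exp (s * ε i ω) ∂P ≤ Real.exp (s ^ 2 / 2))
    (d : ℕ) (hd : 0 < d) (α x : ℝ) (hα : 0 < α) (hx : 0 < x) :
    P {ω | ∃ k : ℕ, d ≤ k ∧ (k : ℝ) ≤ (1 + α) * d ∧
        x ≤ (∑ i ∈ Finset.Icc 1 k, ε i ω) / Real.sqrt k} ≤
      ENNReal.ofReal (Real.exp (-(x ^ 2) / (2 * (1 + α)))) := by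
  have hd' : (0 : ℝ) < d := by exact_mod_cast hd
  set n := ⌊(1 + α) * d⌋₊
  have hdn : d ≤ n := Nat.le_floor (by nlinarith)
  have hn : (n : ℝ) ≤ (1 + α) * d := Nat.floor_le (by positivity)
  have hn0 : (0 : ℝ) < n := by exact_mod_cast hd.trans_le hdn
  have hevent : {ω | ∃ k : ℕ, d ≤ k ∧ (k : ℝ) ≤ (1 + α) * d ∧
      x ≤ (∑ i ∈ Icc 1 k, ε i ω) / √k} ⊆ {ω | ∃ k ≤ n, x * √d ≤ ∑ i ∈ Icc 1 k, ε i ω} := by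
    rintro ω ⟨k, hdk, hkn, hxk⟩
    have hk : (0 : ℝ) < k := by exact_mod_cast hd.trans_le hdk
    refine ⟨k, Nat.le_floor hkn, ?_⟩
    calc x * √d ≤ x * √k := by gcongr
      _ ≤ _ := (le_div_iff₀ (sqrt_pos.2 hk)).1 hxk
  refine (measure_mono hevent).trans <| (measure_exists_le_sum_Icc_le_exp hmeas hindep hint hsub
    (hd.trans_le hdn) (by positivity)).trans <| ENNReal.ofReal_le_ofReal <| exp_le_exp.2 ?_
  rw [mul_pow, sq_sqrt hd'.le, neg_div, neg_div, neg_le_neg_iff,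
    div_le_div_iff₀ (by positivity) (by positivity)]
  nlinarith [mul_le_mul_of_nonneg_left hn (sq_nonneg x)]
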